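/- arXiv:0904.4614 — 4 statements merged into one kernel-verified Lean document; each statement's English description precedes it below -/
import Mathlib

section
/- Let E be a finite-dimensional vector space over a field K, and let U and V be linear subspaces of E with dim U = dim V. Then there exists a linear subspace W of E that is simultaneously a complement of U and of V in E, i.e., U ⊕ W = E and V ⊕ W = E (W is a common supplementary subspace of U and V). -/
/-!
Induction on the codimension of `U`. If `U ≠ ⊤` then also `V ≠ ⊤`, and as no group is the union
of two proper subgroups there is a vector `x` outside both. Adjoining `x` to `U` and to `V` keeps
their dimensions equal and lowers the codimension, and a common complement `W` of `U ⊔ K ∙ x` and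
`V ⊔ K ∙ x` gives the common complement `K ∙ x ⊔ W` of `U` and `V` (modularity of the lattice of
subspaces).
-/

open Module Submodule

theorem Submodule.exists_notMem_and_notMem_of_lt_top {R M : Type*} [Ring R] [AddCommGroup M]
    [Module R M] {U V : Submodule R M} (hU : U < ⊤) (hV : V < ⊤) : ∃ x, x ∉ U ∧ x ∉ V := by
  obtain ⟨a, -, haU⟩ := SetLike.exists_of_lt hU
  obtain ⟨b, -, hbV⟩ := SetLike.exists_of_lt hV
  by_cases haV : a ∈ V
  · by_cases hbU : b ∈ U
    · exact ⟨a + b, (U.add_mem_iff_left hbU).not.2 haU, (V.add_mem_iff_right haV).not.2 hbV⟩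
    · exact ⟨b, hbU, hbV⟩
  · exact ⟨a, haU, haV⟩

/-- In a finite-dimensional vector space `E` over a field `K`, any two linear subspaces
of the same dimension admit a common complement. -/
theorem common_complement_of_finrank_eq
    {K E : Type*} [Field K] [AddCommGroup E] [Module K E] [FiniteDimensional K E]
    (U V : Submodule K E) (h : Module.finrank K U = Module.finrank K V) :
    ∃ W : Submodule K E, IsCompl U W ∧ IsCompl V W := by
  induction hn : finrank K E - finrank K U generalizing U V with
  | zero =>
    have hU : finrank K U = finrank K E := le_antisymm U.finrank_le (by omega)
    rw [eq_top_of_finrank_eq hU, eq_top_of_finrank_eq (h.symm.trans hU)]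
    exact ⟨⊥, isCompl_top_bot, isCompl_top_bot⟩
  | succ n ih =>
    have hU : finrank K U < finrank K E := by omega
    obtain ⟨x, hxU, hxV⟩ := exists_notMem_and_notMem_of_lt_top
      (lt_top_of_finrank_lt_finrank hU) (lt_top_of_finrank_lt_finrank (h ▸ hU))
    obtain ⟨W, hUW, hVW⟩ := ih (U ⊔ K ∙ x) (V ⊔ K ∙ x)
      (by rw [finrank_sup_span_singleton hxU, finrank_sup_span_singleton hxV, h])
      (by rw [finrank_sup_span_singleton hxU]; omega)
    exact ⟨K ∙ x ⊔ W,
      (disjoint_span_singleton_of_notMem hxU).isCompl_sup_right_of_isCompl_sup_left hUW,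
      (disjoint_span_singleton_of_notMem hxV).isCompl_sup_right_of_isCompl_sup_left hVW⟩
end

section
/- Let K, N, P be finite-dimensional smooth real manifolds without boundary with dim N = dim P = d, let η : K → N and θ : K → P be smooth submersions, and let m ∈ K. Then there exist an open neighborhood Ω of 0 in ℝᵈ and a smooth map c : Ω → K with c(0) = m such that η ∘ c is a diffeomorphism from Ω onto an open subset of N and θ ∘ c is a diffeomorphism from Ω onto an open subset of P. (This is the existence of a small d-disc through m simultaneously transverse to the η-fibers and the θ-fibers, mapped diffeomorphically onto open sets by both submersions, used in the proof that Morita-equivalent groupoids with bases of equal dimension d are linked by a groupoid with base of dimension d.) -/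
/-!
The kernels of `dη(m)` and `dθ(m)` both have codimension `d`, so they have a common complement
`V`. A `d`-disc `c` through `m` that is linear in a chart of `K` and tangent to `V` is therefore
mapped by both `η` and `θ` with invertible derivative at its centre, and the inverse function
theorem makes both composites `η ∘ c` and `θ ∘ c` diffeomorphisms onto open sets on every small
enough open neighbourhood of `0`.
-/

open scoped Manifold
open Set Filter Topology Module

theorem Submodule.exists_notMem_notMem_of_ne_top {R M : Type*} [Ring R] [AddCommGroup M]
    [Module R M] {p q : Submodule R M} (hp : p ≠ ⊤) (hq : q ≠ ⊤) : ∃ v, v ∉ p ∧ v ∉ q := by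
  obtain ⟨x, hxp⟩ := SetLike.exists_not_mem_of_ne_top p hp
  obtain ⟨y, hyq⟩ := SetLike.exists_not_mem_of_ne_top q hq
  by_cases hxq : x ∈ q
  · by_cases hyp : y ∈ p
    · exact ⟨x + y, fun h ↦ hxp ((p.add_mem_iff_left hyp).1 h),
        fun h ↦ hyq ((q.add_mem_iff_right hxq).1 h)⟩
    · exact ⟨y, hyp, hyq⟩
  · exact ⟨x, hxp, hxq⟩

theorem Submodule.exists_isCompl_isCompl_of_finrank_eq {K V : Type*} [DivisionRing K]
    [AddCommGroup V] [Module K V] [FiniteDimensional K V] {p q : Submodule K V}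
    (h : finrank K p = finrank K q) : ∃ W : Submodule K V, IsCompl W p ∧ IsCompl W q := by
  suffices ∀ n (p q : Submodule K V), finrank K p + n = finrank K V →
      finrank K q + n = finrank K V → ∃ W : Submodule K V, IsCompl W p ∧ IsCompl W q from
    this _ p q (Nat.add_sub_of_le p.finrank_le) (h ▸ Nat.add_sub_of_le p.finrank_le)
  intro n
  induction n with
  | zero =>
    intro p q hp hq
    rw [eq_top_of_finrank_eq hp, eq_top_of_finrank_eq hq]
    exact ⟨⊥, isCompl_bot_top, isCompl_bot_top⟩
  | succ n ih =>
    intro p q hp hq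
    have ne_top {r : Submodule K V} (hr : finrank K r + (n + 1) = finrank K V) : r ≠ ⊤ := by
      rintro rfl
      rw [finrank_top] at hr
      omega
    obtain ⟨v, hvp, hvq⟩ := exists_notMem_notMem_of_ne_top (ne_top hp) (ne_top hq)
    -- a common complement of `p ⊔ Kv` and `q ⊔ Kv`, enlarged by `v`, complements `p` and `q`
    obtain ⟨W, hWp, hWq⟩ := ih (p ⊔ span K {v}) (q ⊔ span K {v})
      (by rw [finrank_sup_span_singleton hvp]; omega)
      (by rw [finrank_sup_span_singleton hvq]; omega)
    exact ⟨span K {v} ⊔ W,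
      ((disjoint_span_singleton_of_notMem hvp).isCompl_sup_right_of_isCompl_sup_left hWp.symm).symm,
      ((disjoint_span_singleton_of_notMem hvq).isCompl_sup_right_of_isCompl_sup_left hWq.symm).symm⟩

theorem LinearMap.bijective_domRestrict_of_isCompl_ker {R M N : Type*} [Ring R] [AddCommGroup M]
    [Module R M] [AddCommGroup N] [Module R N] {f : M →ₗ[R] N} (hf : Function.Surjective f)
    {W : Submodule R M} (hW : IsCompl W (ker f)) : Function.Bijective (f.domRestrict W) := by
  refine ⟨injective_domRestrict_iff.2 hW.disjoint, fun y ↦ ?_⟩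
  obtain ⟨x, rfl⟩ := hf y
  obtain ⟨w, hw, k, hk, rfl⟩ := Submodule.mem_sup.1 (hW.sup_eq_top ▸ Submodule.mem_top (x := x))
  exact ⟨⟨w, hw⟩, by simp [mem_ker.1 hk]⟩

theorem LinearMap.exists_rightInverse_comp_bijective {K V W : Type*} [DivisionRing K]
    [AddCommGroup V] [Module K V] [FiniteDimensional K V] [AddCommGroup W] [Module K W]
    {f g : V →ₗ[K] W} (hf : Function.Surjective f) (hg : Function.Surjective g) :
    ∃ L : W →ₗ[K] V, f ∘ₗ L = id ∧ Function.Bijective (g ∘ₗ L) := by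
  have finrank_ker {h : V →ₗ[K] W} (hh : Function.Surjective h) :
      finrank K (ker h) = finrank K V - finrank K W := by
    have := finrank_range_add_finrank_ker h
    rw [range_eq_top.2 hh, finrank_top] at this
    omega
  obtain ⟨U, hUf, hUg⟩ := Submodule.exists_isCompl_isCompl_of_finrank_eq
    ((finrank_ker hf).trans (finrank_ker hg).symm)
  let e := LinearEquiv.ofBijective _ (bijective_domRestrict_of_isCompl_ker hf hUf)
  refine ⟨U.subtype ∘ₗ e.symm.toLinearMap, ?_, ?_⟩
  · ext y
    exact e.apply_symm_apply y
  · exact (bijective_domRestrict_of_isCompl_ker hg hUg).comp e.symm.bijective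

theorem ContinuousLinearMap.exists_isInvertible_comp_of_surjective {𝕜 : Type*}
    [NontriviallyNormedField 𝕜] [CompleteSpace 𝕜] {E F : Type*}
    [NormedAddCommGroup E] [NormedSpace 𝕜 E] [FiniteDimensional 𝕜 E]
    [NormedAddCommGroup F] [NormedSpace 𝕜 F] {A B : E →L[𝕜] F}
    (hA : Function.Surjective A) (hB : Function.Surjective B) :
    ∃ L : F →L[𝕜] E, (A ∘L L).IsInvertible ∧ (B ∘L L).IsInvertible := by
  have : FiniteDimensional 𝕜 F := Module.Finite.of_surjective (A : E →ₗ[𝕜] F) hA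
  have isInvertible {T : F →L[𝕜] F} (hT : Function.Bijective T) : T.IsInvertible :=
    ⟨(LinearEquiv.ofBijective (T : F →ₗ[𝕜] F) hT).toContinuousLinearEquiv, rfl⟩
  obtain ⟨L, hAL, hBL⟩ := LinearMap.exists_rightInverse_comp_bijective hA hB
  have hAL' : Function.Bijective ((A : E →ₗ[𝕜] F) ∘ₗ L) := by
    rw [hAL, LinearMap.id_coe]
    exact Function.bijective_id
  exact ⟨L.toContinuousLinearMap, isInvertible hAL', isInvertible hBL⟩

section InverseFunction

variable {𝕜 : Type*} [RCLike 𝕜] {X Y : Type*} [NormedAddCommGroup X] [NormedSpace 𝕜 X]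
  [CompleteSpace X] [NormedAddCommGroup Y] [NormedSpace 𝕜 Y] {n : WithTop ℕ∞}

def OpenPartialHomeomorph.toPartialDiffeomorph (Φ : OpenPartialHomeomorph X Y)
    (hΦ : ContDiffOn 𝕜 n Φ Φ.source) (hn : 1 ≤ n)
    (hΦ' : ∀ x ∈ Φ.source, (fderiv 𝕜 Φ x).IsInvertible) :
    PartialDiffeomorph 𝓘(𝕜, X) 𝓘(𝕜, Y) X Y n where
  toPartialEquiv := Φ.toPartialEquiv
  open_source := Φ.open_source
  open_target := Φ.open_target
  contMDiffOn_toFun := hΦ.contMDiffOn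
  contMDiffOn_invFun y hy := by
    have hx := Φ.map_target hy
    have hΦx := hΦ.contDiffAt (Φ.open_source.mem_nhds hx)
    obtain ⟨f', hf'⟩ := hΦ' _ hx
    have hder : HasFDerivAt Φ (f' : X →L[𝕜] Y) (Φ.symm y) :=
      hf' ▸ (hΦx.differentiableAt (ne_bot_of_le_ne_bot one_ne_zero hn)).hasFDerivAt
    exact (Φ.contDiffAt_symm hy hder hΦx).contMDiffAt.contMDiffWithinAt

theorem ContDiffOn.exists_partialDiffeomorph_of_isInvertible_fderiv {F : X → Y} {s : Set X} {a : X}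
    (hF : ContDiffOn 𝕜 n F s) (hs : IsOpen s) (ha : a ∈ s) (hn : 1 ≤ n)
    (hF' : (fderiv 𝕜 F a).IsInvertible) :
    ∃ Φ : PartialDiffeomorph 𝓘(𝕜, X) 𝓘(𝕜, Y) X Y n,
      a ∈ Φ.source ∧ Φ.source ⊆ s ∧ EqOn F Φ Φ.source := by
  have hn0 : n ≠ 0 := ne_bot_of_le_ne_bot one_ne_zero hn
  have hFa := hF.contDiffAt (hs.mem_nhds ha)
  obtain ⟨f', hf'⟩ := hF'
  have hder : HasFDerivAt F (f' : X →L[𝕜] Y) a := hf' ▸ (hFa.differentiableAt hn0).hasFDerivAt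
  -- the local inverse is only known to be smooth where the derivative stays invertible
  let U := s ∩ fderiv 𝕜 F ⁻¹' {T | T.IsInvertible}
  have hU : IsOpen U :=
    (hF.continuousOn_fderiv_of_isOpen hs hn).isOpen_inter_preimage hs ContinuousLinearEquiv.isOpen
  let Φ := (hFa.toOpenPartialHomeomorph F hder hn0).restrOpen U hU
  have hΦ : (Φ : X → Y) = F := hFa.toOpenPartialHomeomorph_coe hder hn0
  have hΦs : Φ.source ⊆ s := fun x hx ↦ hx.2.1
  refine ⟨Φ.toPartialDiffeomorph (hΦ ▸ hF.mono hΦs) hn fun x hx ↦ hΦ ▸ hx.2.2,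
    ⟨hFa.mem_toOpenPartialHomeomorph_source hder hn0, ha, ⟨f', hf'⟩⟩, hΦs, ?_⟩
  intro x _
  exact congrFun hΦ.symm x

end InverseFunction

noncomputable def PartialDiffeomorph.extChartAt {𝕜 E H M : Type*} [NontriviallyNormedField 𝕜]
    [NormedAddCommGroup E] [NormedSpace 𝕜 E] [TopologicalSpace H] {I : ModelWithCorners 𝕜 E H}
    [I.Boundaryless] [TopologicalSpace M] [ChartedSpace H M] {n : WithTop ℕ∞}
    [IsManifold I n M] (x : M) : PartialDiffeomorph I 𝓘(𝕜, E) M E n where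
  toPartialEquiv := _root_.extChartAt I x
  open_source := isOpen_extChartAt_source x
  open_target := isOpen_extChartAt_target x
  contMDiffOn_toFun := extChartAt_source (I := I) x ▸ contMDiffOn_extChartAt
  contMDiffOn_invFun := contMDiffOn_extChartAt_symm x

theorem ContMDiffOn.isLocalDiffeomorphAt_of_hasMFDerivAt {𝕜 : Type*} [RCLike 𝕜] {X Y : Type*}
    [NormedAddCommGroup X] [NormedSpace 𝕜 X] [CompleteSpace X] [NormedAddCommGroup Y]
    [NormedSpace 𝕜 Y] {n : WithTop ℕ∞} {N : Type*} [TopologicalSpace N] [ChartedSpace Y N]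
    [IsManifold 𝓘(𝕜, Y) n N] {g : X → N} {s : Set X} {a : X}
    (hg : ContMDiffOn 𝓘(𝕜, X) 𝓘(𝕜, Y) n g s) (hs : IsOpen s) (ha : a ∈ s) (hn : 1 ≤ n)
    {f' : X →L[𝕜] Y} (hf' : HasMFDerivAt 𝓘(𝕜, X) 𝓘(𝕜, Y) g a f') (hf'_inv : f'.IsInvertible) :
    IsLocalDiffeomorphAt 𝓘(𝕜, X) 𝓘(𝕜, Y) n g a := by
  let χ : PartialDiffeomorph 𝓘(𝕜, Y) 𝓘(𝕜, Y) N Y n := .extChartAt (g a)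
  let t := s ∩ g ⁻¹' χ.source
  have ht : IsOpen t := hg.continuousOn.isOpen_inter_preimage hs χ.open_source
  have hF : ContDiffOn 𝕜 n (χ ∘ g) t :=
    contMDiffOn_iff_contDiffOn.1 (χ.contMDiffOn.comp (hg.mono inter_subset_left) fun _ h ↦ h.2)
  have hF' : HasFDerivAt (χ ∘ g) f' a := by
    have := hf'.2
    rw [ModelWithCorners.range_eq_univ] at this
    exact hasFDerivWithinAt_univ.1 this
  obtain ⟨Φ, haΦ, hΦt, hΦ⟩ :=
    hF.exists_partialDiffeomorph_of_isInvertible_fderiv ht ⟨ha, mem_extChartAt_source _⟩ hn (hF'.fderiv ▸ hf'_inv)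
  refine ⟨Φ.trans χ.symm, ⟨haΦ, ?_⟩, fun x hx ↦ ?_⟩
  · show Φ a ∈ χ.symm.source
    rw [← hΦ haΦ]
    exact χ.map_source (hΦt haΦ).2
  · show g x = χ.symm (Φ x)
    rw [← hΦ hx.1]
    exact (χ.left_inv (hΦt hx.1).2).symm

section DiffeomorphOntoOpen

variable {𝕜 : Type*} [NontriviallyNormedField 𝕜] {E H F G : Type*}
  [NormedAddCommGroup E] [NormedSpace 𝕜 E] [TopologicalSpace H]
  [NormedAddCommGroup F] [NormedSpace 𝕜 F] [TopologicalSpace G]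
  {M N : Type*} [TopologicalSpace M] [ChartedSpace H M] [TopologicalSpace N] [ChartedSpace G N]

def IsDiffeomorphOntoOpen (I : ModelWithCorners 𝕜 E H) (J : ModelWithCorners 𝕜 F G)
    (n : WithTop ℕ∞) (f : M → N) (Ω : Set M) : Prop :=
  InjOn f Ω ∧ IsOpen (f '' Ω) ∧ ∃ σ : N → M, ContMDiffOn J I n σ (f '' Ω) ∧ ∀ x ∈ Ω, σ (f x) = x

theorem IsLocalDiffeomorphAt.eventually_isDiffeomorphOntoOpen {I : ModelWithCorners 𝕜 E H}
    {J : ModelWithCorners 𝕜 F G} {n : WithTop ℕ∞} {f : M → N} {x : M}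
    (hf : IsLocalDiffeomorphAt I J n f x) :
    ∀ᶠ Ω in (𝓝 x).smallSets, IsOpen Ω → IsDiffeomorphOntoOpen I J n f Ω := by
  obtain ⟨Φ, hx, hfΦ⟩ := hf
  refine eventually_smallSets.2 ⟨Φ.source, Φ.open_source.mem_nhds hx, fun Ω hΩΦ hΩ ↦ ?_⟩
  have himage : f '' Ω = Φ '' Ω := (hfΦ.mono hΩΦ).image_eq
  refine ⟨(Φ.injOn.mono hΩΦ).congr (hfΦ.mono hΩΦ).symm, ?_, Φ.symm, ?_, fun y hy ↦ ?_⟩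
  · rw [himage]
    exact Φ.toOpenPartialHomeomorph.isOpen_image_of_subset_source hΩ hΩΦ
  · refine Φ.symm.contMDiffOn.mono ?_
    rw [himage]
    exact (Φ.mapsTo.mono_left hΩΦ).image_subset
  · rw [hfΦ (hΩΦ hy)]
    exact Φ.left_inv (hΩΦ hy)

end DiffeomorphOntoOpen

theorem exists_contMDiffOn_hasMFDerivAt {𝕜 : Type*} [NontriviallyNormedField 𝕜] {E X : Type*}
    [NormedAddCommGroup E] [NormedSpace 𝕜 E] [NormedAddCommGroup X] [NormedSpace 𝕜 X]
    {M : Type*} [TopologicalSpace M] [ChartedSpace E M] {n : WithTop ℕ∞}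
    [IsManifold 𝓘(𝕜, E) n M] (m : M) (L : X →L[𝕜] E) :
    ∃ (c : X → M) (s : Set X), IsOpen s ∧ 0 ∈ s ∧ ContMDiffOn 𝓘(𝕜, X) 𝓘(𝕜, E) n c s ∧
      c 0 = m ∧ HasMFDerivAt 𝓘(𝕜, X) 𝓘(𝕜, E) c 0 L := by
  let φ := extChartAt 𝓘(𝕜, E) m
  let γ : X → E := fun x ↦ φ m + L x
  have hγ : ContDiff 𝕜 n γ := contDiff_const.add L.contDiff
  have h0 : γ 0 ∈ φ.target := by simp [γ, φ]
  have hc0 : φ.symm (γ 0) = m := by simp [γ, φ]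
  have hs : IsOpen (γ ⁻¹' φ.target) := (isOpen_extChartAt_target m).preimage hγ.continuous
  refine ⟨φ.symm ∘ γ, γ ⁻¹' φ.target, hs, h0, (contMDiffOn_extChartAt_symm m).comp
    hγ.contMDiff.contMDiffOn (fun _ h ↦ h), hc0,
    ((continuousOn_extChartAt_symm m).continuousAt (extChartAt_target_mem_nhds' h0)).comp
      hγ.continuous.continuousAt, ?_⟩
  have hwritten : writtenInExtChartAt 𝓘(𝕜, X) 𝓘(𝕜, E) 0 (φ.symm ∘ γ) =ᶠ[𝓝 0] γ :=
    eventually_of_mem (hs.mem_nhds h0) fun x hx ↦ by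
      simp only [writtenInExtChartAt, extChartAt_model_space_eq_id, PartialEquiv.refl_symm,
        PartialEquiv.refl_coe, Function.comp_apply, id, hc0]
      exact φ.right_inv hx
  exact ((L.hasFDerivAt.const_add (φ m)).congr_of_eventuallyEq hwritten).hasFDerivWithinAt

/-- If `η : K → N` and `θ : K → P` are smooth submersions onto manifolds of the same
dimension `d` (manifolds without boundary, not assumed Hausdorff or second countable), then
through any point `m : K` there is a small smooth `d`-disc, parametrized by an open
neighborhood `Ω` of `0` in `ℝᵈ`, which both `η` and `θ` map diffeomorphically onto open
subsets of `N` and `P` respectively. -/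
theorem exists_common_transverse_disc
    {E : Type*} [NormedAddCommGroup E] [NormedSpace ℝ E] [FiniteDimensional ℝ E]
    (d : ℕ)
    {K : Type*} [TopologicalSpace K] [ChartedSpace E K]
    [IsManifold 𝓘(ℝ, E) (⊤ : ℕ∞) K]
    {N : Type*} [TopologicalSpace N] [ChartedSpace (EuclideanSpace ℝ (Fin d)) N]
    [IsManifold (𝓡 d) (⊤ : ℕ∞) N]
    {P : Type*} [TopologicalSpace P] [ChartedSpace (EuclideanSpace ℝ (Fin d)) P]
    [IsManifold (𝓡 d) (⊤ : ℕ∞) P]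
    (η : K → N) (hη : ContMDiff 𝓘(ℝ, E) (𝓡 d) (⊤ : ℕ∞) η)
    (hη' : ∀ x : K, Function.Surjective ⇑(mfderiv 𝓘(ℝ, E) (𝓡 d) η x))
    (θ : K → P) (hθ : ContMDiff 𝓘(ℝ, E) (𝓡 d) (⊤ : ℕ∞) θ)
    (hθ' : ∀ x : K, Function.Surjective ⇑(mfderiv 𝓘(ℝ, E) (𝓡 d) θ x))
    (m : K) :
    ∃ (Ω : Set (EuclideanSpace ℝ (Fin d))) (c : EuclideanSpace ℝ (Fin d) → K),
      IsOpen Ω ∧ (0 : EuclideanSpace ℝ (Fin d)) ∈ Ω ∧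
      ContMDiffOn (𝓡 d) 𝓘(ℝ, E) (⊤ : ℕ∞) c Ω ∧ c 0 = m ∧
      (Set.InjOn (η ∘ c) Ω ∧ IsOpen ((η ∘ c) '' Ω) ∧
        ∃ σ : N → EuclideanSpace ℝ (Fin d),
          ContMDiffOn (𝓡 d) (𝓡 d) (⊤ : ℕ∞) σ ((η ∘ c) '' Ω) ∧
          ∀ x ∈ Ω, σ (η (c x)) = x) ∧
      (Set.InjOn (θ ∘ c) Ω ∧ IsOpen ((θ ∘ c) '' Ω) ∧
        ∃ τ : P → EuclideanSpace ℝ (Fin d),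
          ContMDiffOn (𝓡 d) (𝓡 d) (⊤ : ℕ∞) τ ((θ ∘ c) '' Ω) ∧
          ∀ x ∈ Ω, τ (θ (c x)) = x) := by
  obtain ⟨L, hηL, hθL⟩ := ContinuousLinearMap.exists_isInvertible_comp_of_surjective
    (𝕜 := ℝ) (E := E) (F := EuclideanSpace ℝ (Fin d)) (hη' m) (hθ' m)
  obtain ⟨c, Ω₀, hΩ₀, h0, hc, rfl, hc'⟩ := exists_contMDiffOn_hasMFDerivAt (n := (⊤ : ℕ∞)) m L
  have hηc : IsLocalDiffeomorphAt (𝓡 d) (𝓡 d) (⊤ : ℕ∞) (η ∘ c) 0 :=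
    (hη.comp_contMDiffOn hc).isLocalDiffeomorphAt_of_hasMFDerivAt hΩ₀ h0 (by simp)
      ((hη.mdifferentiableAt (by simp)).hasMFDerivAt.comp 0 hc') hηL
  have hθc : IsLocalDiffeomorphAt (𝓡 d) (𝓡 d) (⊤ : ℕ∞) (θ ∘ c) 0 :=
    (hθ.comp_contMDiffOn hc).isLocalDiffeomorphAt_of_hasMFDerivAt hΩ₀ h0 (by simp)
      ((hθ.mdifferentiableAt (by simp)).hasMFDerivAt.comp 0 hc') hθL
  obtain ⟨Ω₁, hΩ₁, hΩ₁_diffeo⟩ := eventually_smallSets.1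
    (hηc.eventually_isDiffeomorphOntoOpen.and hθc.eventually_isDiffeomorphOntoOpen)
  obtain ⟨Ω, hΩΩ₁, hΩ, h0Ω⟩ := mem_nhds_iff.1 (inter_mem hΩ₁ (hΩ₀.mem_nhds h0))
  obtain ⟨hηΩ, hθΩ⟩ := hΩ₁_diffeo Ω (hΩΩ₁.trans inter_subset_left)
  exact ⟨Ω, c, hΩ, h0Ω, hc.mono (hΩΩ₁.trans inter_subset_right), rfl, hηΩ hΩ, hθΩ hΩ⟩
end

section
/- Fix n ∈ ℕ and let X be a topological space (not assumed Hausdorff) such that every point of X has an open neighborhood homeomorphic to an open subset of ℝⁿ. Then there exist a Hausdorff topological space Y, in which every point also has an open neighborhood homeomorphic to an open subset of ℝⁿ, and a surjective local homeomorphism j : Y → X. (This is the 'covering trick': replacing a possibly non-Hausdorff manifold by the disjoint union of Euclidean chart domains, used to show that Morita-equivalent object-separated groupoids are linked by an object-separated groupoid.) -/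
/-- Every point of `Z` has an open neighborhood homeomorphic to an open subset of `ℝⁿ`. -/
def LocallyEuclidean (n : ℕ) (Z : Type*) [TopologicalSpace Z] : Prop :=
  ∀ z : Z, ∃ (U : Set Z) (V : Set (Fin n → ℝ)),
    z ∈ U ∧ IsOpen U ∧ IsOpen V ∧ Nonempty (U ≃ₜ V)

/-!
The disjoint union `Y` of one Euclidean chart domain around each point of `X` is Hausdorff, since
each summand embeds in `ℝⁿ`, and the tautological map `Y → X` is a surjective local
homeomorphism. Being locally Euclidean pulls back along local homeomorphisms, so `Y` is locally
Euclidean as well.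
-/

open Topology

theorem locallyEuclidean_iff_exists_openPartialHomeomorph (n : ℕ) (Z : Type*)
    [TopologicalSpace Z] :
    LocallyEuclidean n Z ↔ ∀ z : Z, ∃ e : OpenPartialHomeomorph Z (Fin n → ℝ), z ∈ e.source := by
  refine ⟨fun h z => ?_, fun h z => ?_⟩
  · obtain ⟨U, V, hz, hU, hV, ⟨φ⟩⟩ := h z
    have : Nonempty U := ⟨⟨z, hz⟩⟩
    have hφ : IsOpenEmbedding (Subtype.val ∘ φ) :=
      hV.isOpenEmbedding_subtypeVal.comp φ.isOpenEmbedding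
    exact ⟨(hφ.toOpenPartialHomeomorph _).lift_openEmbedding hU.isOpenEmbedding_subtypeVal,
      ⟨⟨z, hz⟩, Set.mem_univ _, rfl⟩⟩
  · obtain ⟨e, hz⟩ := h z
    exact ⟨e.source, e.target, hz, e.open_source, e.open_target, ⟨e.toHomeomorphSourceTarget⟩⟩

theorem LocallyEuclidean.of_isLocalHomeomorph {n : ℕ} {Z W : Type*} [TopologicalSpace Z]
    [TopologicalSpace W] {f : Z → W} (hW : LocallyEuclidean n W) (hf : IsLocalHomeomorph f) :
    LocallyEuclidean n Z := by
  rw [locallyEuclidean_iff_exists_openPartialHomeomorph] at hW ⊢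
  intro z
  obtain ⟨e, hz, rfl⟩ := hf z
  obtain ⟨c, hc⟩ := hW (e z)
  exact ⟨e.trans c, hz, hc⟩

theorem isLocalHomeomorph_sigma {ι X : Type*} {σ : ι → Type*} [∀ i, TopologicalSpace (σ i)]
    [TopologicalSpace X] {f : Sigma σ → X} :
    IsLocalHomeomorph f ↔ ∀ i, IsLocalHomeomorph fun a => f ⟨i, a⟩ := by
  refine ⟨fun hf i => hf.comp IsOpenEmbedding.sigmaMk.isLocalHomeomorph, fun hf => ?_⟩
  refine IsLocalHomeomorph.mk f fun ⟨i, a⟩ => ?_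
  obtain ⟨e, ha, he⟩ := hf i a
  have : Nonempty X := ⟨f ⟨i, a⟩⟩
  refine ⟨e.lift_openEmbedding IsOpenEmbedding.sigmaMk, ⟨a, ha, rfl⟩, ?_⟩
  rintro _ ⟨b, -, rfl⟩
  rw [e.lift_openEmbedding_apply]
  exact congr_fun he b

/-- The covering trick: any (possibly non-Hausdorff) `n`-dimensional topological manifold `X`
admits a surjective local homeomorphism `j : Y → X` from a Hausdorff `n`-dimensional
topological manifold `Y` (e.g. the disjoint union of Euclidean chart domains). -/
theorem exists_hausdorff_cover_of_locallyEuclidean (n : ℕ) {X : Type u} [TopologicalSpace X]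
    (hX : LocallyEuclidean n X) :
    ∃ (Y : Type u) (_ : TopologicalSpace Y), T2Space Y ∧ LocallyEuclidean n Y ∧
      ∃ j : Y → X, Function.Surjective j ∧ IsLocalHomeomorph j := by
  choose c hc using (locallyEuclidean_iff_exists_openPartialHomeomorph n X).1 hX
  have hT2 : ∀ x, T2Space (c x).source := fun x =>
    (c x).toHomeomorphSourceTarget.isEmbedding.t2Space
  have hj : IsLocalHomeomorph fun p : Σ x, (c x).source => (p.2 : X) :=
    isLocalHomeomorph_sigma.2 fun x =>
      (c x).open_source.isOpenEmbedding_subtypeVal.isLocalHomeomorph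
  exact ⟨Σ x, (c x).source, inferInstance, inferInstance, hX.of_isLocalHomeomorph hj, _,
    fun x => ⟨⟨x, x, hc x⟩, rfl⟩, hj⟩
end

section
/- Let G and H be groupoids (categories in which every morphism is invertible) and let φ : G ⥤ H be a fully faithful functor that is surjective on objects. Let V be a set of arrows of H that generates a full subgroupoid of H, and let U₀ be a set of objects of G such that φ(U₀) contains the base of V. Define U to be the set of arrows g of G whose source and target both belong to U₀ and such that φ(g) ∈ V. Then U generates a full subgroupoid of G. (This is the algebraic content of the hard direction of the lemma proving Morita-invariance of compact generation: lifting a fully generating set along a Morita morphism by decomposing φ(g) as a product of generators and lifting each factor using fullness, then concluding by faithfulness.) -/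
open CategoryTheory

/-- The base of a family of arrows `S` of a groupoid: the objects occurring as source or
target of some arrow in `S`. -/
def arrowBase {G : Type*} [Groupoid G] (S : ∀ a b : G, Set (a ⟶ b)) : Set G :=
  {x : G | (∃ (b : G) (f : x ⟶ b), f ∈ S x b) ∨ (∃ (a : G) (f : a ⟶ x), f ∈ S a x)}

/-- A family of arrows `S` generates a full subgroupoid if every arrow whose source and
target lie in the base of `S` belongs to the subgroupoid generated by `S`. -/
def GeneratesFull {G : Type*} [Groupoid G] (S : ∀ a b : G, Set (a ⟶ b)) : Prop :=
  ∀ a b : G, a ∈ arrowBase S → b ∈ arrowBase S →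
    ∀ f : a ⟶ b, f ∈ (Subgroupoid.generated S).arrows a b

/-!
Fullness of `φ` makes the arrows of `H` all of whose lifts with endpoints in `U₀` lie in the
subgroupoid `⟨U⟩` generated by `U` into a subgroupoid of `H`. It contains `V`, hence `⟨V⟩`, and
`⟨V⟩` contains `φ f` for every arrow `f` between objects of the base of `U`; so `f` itself, being
a lift of `φ f`, lies in `⟨U⟩`.
-/

namespace CategoryTheory.Subgroupoid

variable {G H : Type*} [Groupoid G] [Groupoid H]

def ofLiftsMem (φ : G ⥤ H) [φ.Full] (K : Set G) (S : Subgroupoid G) : Subgroupoid H where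
  arrows x y := {h | x ∈ φ.obj '' K ∧ y ∈ φ.obj '' K ∧
    ∀ a b (ha : φ.obj a = x) (hb : φ.obj b = y), a ∈ K → b ∈ K → ∀ g : a ⟶ b,
      φ.map g = eqToHom ha ≫ h ≫ eqToHom hb.symm → g ∈ S.arrows a b}
  inv := by
    rintro x y h ⟨hx, hy, hlift⟩
    refine ⟨hy, hx, ?_⟩
    rintro a b rfl rfl haK hbK g hg
    rw [← S.inv_mem_iff]
    refine hlift b a rfl rfl hbK haK _ ?_
    simp_all [Groupoid.inv_eq_inv]
  mul := by
    rintro x y z h ⟨hx, ⟨b, hbK, rfl⟩, hlift⟩ h' ⟨-, hz, hlift'⟩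
    refine ⟨hx, hz, ?_⟩
    rintro a c rfl rfl haK hcK g hg
    rw [eqToHom_refl, eqToHom_refl, Category.id_comp, Category.comp_id] at hg
    -- lifting `h` by fullness splits `g` into a lift of `h` followed by a lift of `h'`
    have hsplit : g = φ.preimage h ≫ (Groupoid.inv (φ.preimage h) ≫ g) := by simp
    rw [hsplit]
    exact S.mul (hlift a b rfl rfl haK hbK _ (by simp))
      (hlift' b c rfl rfl hbK hcK _ (by simp [Groupoid.inv_eq_inv, hg]))

theorem mem_of_map_mem_ofLiftsMem (φ : G ⥤ H) [φ.Full] {K : Set G} {S : Subgroupoid G}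
    {a b : G} (ha : a ∈ K) (hb : b ∈ K) {f : a ⟶ b}
    (hf : φ.map f ∈ (ofLiftsMem φ K S).arrows (φ.obj a) (φ.obj b)) : f ∈ S.arrows a b :=
  hf.2.2 a b rfl rfl ha hb f (by simp)

end CategoryTheory.Subgroupoid

namespace CategoryTheory.Functor

variable {G H : Type*} [Groupoid G] [Groupoid H]

def liftArrows (φ : G ⥤ H) (V : ∀ x y : H, Set (x ⟶ y)) (U₀ : Set G) :
    ∀ a b : G, Set (a ⟶ b) :=
  fun a b => {g | a ∈ U₀ ∧ b ∈ U₀ ∧ φ.map g ∈ V (φ.obj a) (φ.obj b)}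

theorem arrowBase_liftArrows_subset (φ : G ⥤ H) (V : ∀ x y : H, Set (x ⟶ y)) (U₀ : Set G) :
    arrowBase (φ.liftArrows V U₀) ⊆ U₀ ∩ φ.obj ⁻¹' arrowBase V := by
  rintro c (⟨d, g, hc, -, hg⟩ | ⟨d, g, -, hc, hg⟩)
  · exact ⟨hc, Or.inl ⟨φ.obj d, φ.map g, hg⟩⟩
  · exact ⟨hc, Or.inr ⟨φ.obj d, φ.map g, hg⟩⟩

theorem generated_le_ofLiftsMem_generated_liftArrows (φ : G ⥤ H) [φ.Full]
    {V : ∀ x y : H, Set (x ⟶ y)} {U₀ : Set G} (hU₀ : arrowBase V ⊆ φ.obj '' U₀) :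
    Subgroupoid.generated V ≤
      (Subgroupoid.generated (φ.liftArrows V U₀)).ofLiftsMem φ U₀ := by
  refine sInf_le fun x y h hh => ⟨hU₀ (Or.inl ⟨y, h, hh⟩), hU₀ (Or.inr ⟨x, h, hh⟩), ?_⟩
  rintro a b rfl rfl ha hb g hg
  refine Subgroupoid.subset_generated _ a b ⟨ha, hb, ?_⟩
  simpa [hg] using hh

end CategoryTheory.Functor

theorem generatesFull_lift_of_fullyFaithful_surjObj_general
    {G H : Type*} [Groupoid G] [Groupoid H] (φ : G ⥤ H)
    (hfull : φ.Full)
    (V : ∀ a b : H, Set (a ⟶ b)) (hV : GeneratesFull V)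
    (U₀ : Set G) (hU₀ : arrowBase V ⊆ φ.obj '' U₀) :
    GeneratesFull (fun a b : G =>
      {g : a ⟶ b | a ∈ U₀ ∧ b ∈ U₀ ∧ φ.map g ∈ V (φ.obj a) (φ.obj b)}) := by
  change GeneratesFull (φ.liftArrows V U₀)
  intro a b ha hb f
  obtain ⟨haU, haV⟩ := φ.arrowBase_liftArrows_subset V U₀ ha
  obtain ⟨hbU, hbV⟩ := φ.arrowBase_liftArrows_subset V U₀ hb
  have hgen := φ.generated_le_ofLiftsMem_generated_liftArrows hU₀
  exact Subgroupoid.mem_of_map_mem_ofLiftsMem φ haU hbU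
    ((Subgroupoid.le_iff _ _).mp hgen (hV _ _ haV hbV (φ.map f)))

/-- Lifting a fully generating family of arrows along a Morita morphism: if
`φ : G ⥤ H` is fully faithful and surjective on objects, `V` generates a full subgroupoid
of `H`, and `U₀` is a set of objects of `G` whose image contains the base of `V`, then the
family of arrows of `G` with source and target in `U₀` and image in `V` generates a full
subgroupoid of `G`. -/
theorem generatesFull_lift_of_fullyFaithful_surjObj
    {G H : Type*} [Groupoid G] [Groupoid H] (φ : G ⥤ H)
    (hfull : φ.Full) (hfaithful : φ.Faithful) (hsurj : Function.Surjective φ.obj)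
    (V : ∀ a b : H, Set (a ⟶ b)) (hV : GeneratesFull V)
    (U₀ : Set G) (hU₀ : arrowBase V ⊆ φ.obj '' U₀) :
    GeneratesFull (fun a b : G =>
      {g : a ⟶ b | a ∈ U₀ ∧ b ∈ U₀ ∧ φ.map g ∈ V (φ.obj a) (φ.obj b)}) :=
  generatesFull_lift_of_fullyFaithful_surjObj_general φ hfull V hV U₀ hU₀
end
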